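/- arXiv:1107.1820 — 3 statements merged into one kernel-verified Lean document; each statement's English description precedes it below -/
import Mathlib

section
/- Let q be a prime power and let U be a set of q^3 + 1 points in PG(2, q^2) such that every line meets U in 1 or q+1 points. Then the points of U together with the intersections of secant lines with U form a 2-(q^3+1, q+1, 1) design: any two distinct points of U lie on exactly one line meeting U in q+1 points, and the number of secant lines is q^2(q^2 − q + 1). -/
/-!
Two distinct points `P, Q` of `U` span a line meeting `U` in at least two points, hence in
`q + 1` points, and `P ⊔ Q` is the only line through them. Counting the ordered pairs of
distinct points of `U` by the secant they span gives `#secants · (q + 1) q = (q³ + 1) q³`.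
-/

open Module Finset
open scoped LinearAlgebra.Projectivization

namespace Projectivization

variable {K V : Type*} [Field K] [AddCommGroup V] [Module K V]

theorem finrank_sup_submodule_eq_two {P Q : ℙ K V} (h : P ≠ Q) :
    finrank K ↥(P.submodule ⊔ Q.submodule) = 2 := by
  rw [P.submodule_eq, Q.submodule_eq, ← Submodule.span_insert,
    ← Matrix.range_cons_cons_empty _ _ ![],
    finrank_span_eq_card (linearIndependent_pair_iff_ne.mpr h)]
  simp

theorem eq_sup_submodule_of_finrank_eq_two {P Q : ℙ K V} (h : P ≠ Q) {L : Submodule K V}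
    (hL : finrank K L = 2) (hP : P.submodule ≤ L) (hQ : Q.submodule ≤ L) :
    L = P.submodule ⊔ Q.submodule := by
  simp only [← Submodule.mem_projectivization_iff_submodule_le] at hP hQ
  exact line_unique h _ _ hL (finrank_sup_submodule_eq_two h) hP hQ
    ((Submodule.mem_projectivization_iff_submodule_le _ _).mpr le_sup_left)
    ((Submodule.mem_projectivization_iff_submodule_le _ _).mpr le_sup_right)

def pointsOn (U : Set (ℙ K V)) (L : Submodule K V) : Set (ℙ K V) :=
  {P | P ∈ U ∧ P.submodule ≤ L}

def secants (U : Set (ℙ K V)) (k : ℕ) : Set (Submodule K V) :=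
  {L | finrank K L = 2 ∧ Nat.card (pointsOn U L) = k}

def IsOfType (U : Set (ℙ K V)) (m n : ℕ) : Prop :=
  ∀ L : Submodule K V, finrank K L = 2 →
    Nat.card (pointsOn U L) = m ∨ Nat.card (pointsOn U L) = n

variable {U : Set (ℙ K V)} {k : ℕ}

@[simp]
theorem mem_pointsOn {P : ℙ K V} {L : Submodule K V} :
    P ∈ pointsOn U L ↔ P ∈ U ∧ P.submodule ≤ L :=
  Iff.rfl

theorem card_pointsOn_sup_submodule (htype : IsOfType U 1 k)
    {P Q : ℙ K V} (hP : P ∈ U) (hQ : Q ∈ U) (hPQ : P ≠ Q) :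
    Nat.card (pointsOn U (P.submodule ⊔ Q.submodule)) = k := by
  refine (htype _ (finrank_sup_submodule_eq_two hPQ)).resolve_left fun h1 => hPQ ?_
  have : Subsingleton (pointsOn U (P.submodule ⊔ Q.submodule)) :=
    (Nat.card_eq_one_iff_unique.mp h1).1
  exact (Set.subsingleton_coe _).mp this ⟨hP, le_sup_left⟩ ⟨hQ, le_sup_right⟩

theorem card_secants_through_eq_one (htype : IsOfType U 1 k)
    {P Q : ℙ K V} (hP : P ∈ U) (hQ : Q ∈ U) (hPQ : P ≠ Q) :
    Nat.card {L : Submodule K V | finrank K L = 2 ∧ P.submodule ≤ L ∧ Q.submodule ≤ L ∧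
      Nat.card (pointsOn U L) = k} = 1 := by
  have hsecant : {L : Submodule K V | finrank K L = 2 ∧ P.submodule ≤ L ∧ Q.submodule ≤ L ∧
      Nat.card (pointsOn U L) = k} = {P.submodule ⊔ Q.submodule} := by
    ext L
    constructor
    · rintro ⟨hL, hPL, hQL, -⟩
      exact eq_sup_submodule_of_finrank_eq_two hPQ hL hPL hQL
    · rintro rfl
      exact ⟨finrank_sup_submodule_eq_two hPQ, le_sup_left, le_sup_right,
        card_pointsOn_sup_submodule htype hP hQ hPQ⟩
  rw [hsecant, Nat.card_unique]

theorem card_secants_mul [Finite V] (htype : IsOfType U 1 k) :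
    Nat.card (secants U k) * (k * (k - 1)) = Nat.card U * (Nat.card U - 1) := by
  classical
  have : Finite (Submodule K V) := Finite.of_injective _ SetLike.coe_injective
  have : Fintype (ℙ K V) := Fintype.ofFinite _
  have : Fintype (Submodule K V) := Fintype.ofFinite _
  have hmaps : ∀ PQ ∈ U.toFinset.offDiag,
      PQ.1.submodule ⊔ PQ.2.submodule ∈ (secants U k).toFinset := by
    rintro ⟨P, Q⟩ hPQ
    simp only [mem_offDiag, Set.mem_toFinset] at hPQ ⊢
    exact ⟨finrank_sup_submodule_eq_two hPQ.2.2,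
      card_pointsOn_sup_submodule htype hPQ.1 hPQ.2.1 hPQ.2.2⟩
  have hfiber : ∀ L ∈ (secants U k).toFinset,
      #{PQ ∈ U.toFinset.offDiag | PQ.1.submodule ⊔ PQ.2.submodule = L} = k * k - k := by
    intro L hL
    rw [Set.mem_toFinset] at hL
    have hpairs : {PQ ∈ U.toFinset.offDiag | PQ.1.submodule ⊔ PQ.2.submodule = L} =
        (pointsOn U L).toFinset.offDiag := by
      ext ⟨P, Q⟩
      simp only [mem_filter, mem_offDiag, Set.mem_toFinset, mem_pointsOn]
      constructor
      · rintro ⟨⟨hP, hQ, hPQ⟩, rfl⟩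
        exact ⟨⟨hP, le_sup_left⟩, ⟨hQ, le_sup_right⟩, hPQ⟩
      · rintro ⟨⟨hP, hPL⟩, ⟨hQ, hQL⟩, hPQ⟩
        exact ⟨⟨hP, hQ, hPQ⟩, (eq_sup_submodule_of_finrank_eq_two hPQ hL.1 hPL hQL).symm⟩
    rw [hpairs, offDiag_card, ← Nat.card_eq_card_toFinset, hL.2]
  have hcount := card_eq_sum_card_fiberwise hmaps
  rw [sum_congr rfl hfiber, sum_const, smul_eq_mul, offDiag_card,
    ← Nat.card_eq_card_toFinset, ← Nat.card_eq_card_toFinset] at hcount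
  rw [Nat.mul_sub_one, Nat.mul_sub_one, hcount]

end Projectivization

theorem unital_design_general (q : ℕ)
    (K : Type*) [Field K] [Fintype K] (hK : Fintype.card K = q ^ 2)
    (U : Set (Projectivization K (Fin 3 → K)))
    (hU : Nat.card U = q ^ 3 + 1)
    (hline : ∀ L : Submodule K (Fin 3 → K), Module.finrank K L = 2 →
      Nat.card {P : Projectivization K (Fin 3 → K) | P ∈ U ∧ P.submodule ≤ L} = 1 ∨
      Nat.card {P : Projectivization K (Fin 3 → K) | P ∈ U ∧ P.submodule ≤ L} = q + 1) :
    (∀ P ∈ U, ∀ Q ∈ U, P ≠ Q →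
      Nat.card {L : Submodule K (Fin 3 → K) | Module.finrank K L = 2 ∧
          P.submodule ≤ L ∧ Q.submodule ≤ L ∧
          Nat.card {R : Projectivization K (Fin 3 → K) | R ∈ U ∧ R.submodule ≤ L} = q + 1}
        = 1) ∧
    Nat.card {L : Submodule K (Fin 3 → K) | Module.finrank K L = 2 ∧
        Nat.card {R : Projectivization K (Fin 3 → K) | R ∈ U ∧ R.submodule ≤ L} = q + 1}
      = q ^ 2 * (q ^ 2 - q + 1) := by
  refine ⟨fun P hP Q hQ hPQ => Projectivization.card_secants_through_eq_one hline hP hQ hPQ, ?_⟩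
  have hq : 0 < q := Nat.pos_of_ne_zero fun h => Fintype.card_ne_zero (hK.trans (by simp [h]))
  have hq_le : q ≤ q ^ 2 := Nat.le_self_pow two_ne_zero q
  apply Nat.eq_of_mul_eq_mul_right (show 0 < (q + 1) * q by positivity)
  calc Nat.card (Projectivization.secants U (q + 1)) * ((q + 1) * q)
      = (q ^ 3 + 1) * q ^ 3 := by simpa [hU] using Projectivization.card_secants_mul hline
    _ = q ^ 2 * (q ^ 2 - q + 1) * ((q + 1) * q) := by zify [hq_le]; ring

/-- If `U` is a unital embedded in `PG(2, q²)`, then `U` with the secant-line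
intersections forms a `2-(q³+1, q+1, 1)` design: any two distinct points of `U`
lie on exactly one secant line, and the number of secant lines is `q²(q² − q + 1)`. -/
theorem unital_design (q : ℕ) (hq : ∃ (p n : ℕ), p.Prime ∧ 0 < n ∧ q = p ^ n)
    (K : Type*) [Field K] [Fintype K] (hK : Fintype.card K = q ^ 2)
    (U : Set (Projectivization K (Fin 3 → K)))
    (hU : Nat.card U = q ^ 3 + 1)
    (hline : ∀ L : Submodule K (Fin 3 → K), Module.finrank K L = 2 →
      Nat.card {P : Projectivization K (Fin 3 → K) | P ∈ U ∧ P.submodule ≤ L} = 1 ∨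
      Nat.card {P : Projectivization K (Fin 3 → K) | P ∈ U ∧ P.submodule ≤ L} = q + 1) :
    (∀ P ∈ U, ∀ Q ∈ U, P ≠ Q →
      Nat.card {L : Submodule K (Fin 3 → K) | Module.finrank K L = 2 ∧
          P.submodule ≤ L ∧ Q.submodule ≤ L ∧
          Nat.card {R : Projectivization K (Fin 3 → K) | R ∈ U ∧ R.submodule ≤ L} = q + 1}
        = 1) ∧
    Nat.card {L : Submodule K (Fin 3 → K) | Module.finrank K L = 2 ∧
        Nat.card {R : Projectivization K (Fin 3 → K) | R ∈ U ∧ R.submodule ≤ L} = q + 1}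
      = q ^ 2 * (q ^ 2 - q + 1) :=
  unital_design_general q K hK U hU hline
end

section
/- Let p be a prime, q = p^t, and let b_0, ..., b_n be integers with 0 ≤ b_i ≤ q^2 − 1, not all zero, such that (q^2 − 1) divides b_0 + ... + b_n. Writing each b_i in base p as b_i = Σ_j a_{i,j} p^j and setting λ_j = Σ_i a_{i,j} and s_j = (1/(q^2−1)) Σ_i (p^(2t−j) b_i mod (q^2−1)), one has Σ_{j=0}^{2t−1} λ_j = (p−1) Σ_{j=0}^{2t−1} s_j; equivalently the total base-p digit sum Σ_i σ_p(b_i) equals (p−1) times the sum of the H-type entries. -/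
/-! For `0 < b < p ^ k`, the representative in `{1, …, p ^ k - 1}` of `p ^ (k - j) * b` modulo
`p ^ k - 1` is the `k`-digit base-`p` word of `b` rotated cyclically by `j` places. Summed over all
`k` rotations every digit of `b` visits every position once, giving `σ_p(b) (p ^ k - 1) / (p - 1)`.
Arithmetically: `p ^ (k - j) * b` is the rotation plus `(p ^ k - 1) ⌊b / p ^ j⌋`, and Legendre's
identity `(p - 1) Σ_{j<k} ⌊b / p ^ j⌋ = p b - σ_p(b)` accounts for the quotients. The theorem is
this identity for each `b_i` with `k = 2t`, summed over `i`. -/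

open Finset

namespace Nat

lemma add_mul_sub_one_mod_add_one {v N : ℕ} (y : ℕ) (hv : 0 < v) (hvN : v ≤ N) :
    (v + N * y - 1) % N + 1 = v := by
  rw [Nat.sub_add_comm hv, Nat.mul_comm, Nat.add_mul_mod_self_right,
    Nat.mod_eq_of_lt (by omega)]
  omega

/-- The `k`-digit base-`p` word of `b` with its `j` lowest digits moved to the top. -/
def digitRotate (p k j b : ℕ) : ℕ := p ^ (k - j) * (b % p ^ j) + b / p ^ j

variable {p k j b : ℕ}

lemma digitRotate_pos (hp : 0 < p) (hb : 0 < b) : 0 < digitRotate p k j b := by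
  unfold digitRotate
  rcases Nat.eq_zero_or_pos (b % p ^ j) with hx | hx
  · have hy : b / p ^ j ≠ 0 := fun hy => by
      have := Nat.mod_add_div b (p ^ j)
      rw [hx, hy] at this
      omega
    exact Nat.add_pos_right _ (Nat.pos_of_ne_zero hy)
  · exact Nat.add_pos_left (Nat.mul_pos (by positivity) hx) _

lemma digitRotate_lt (hj : j ≤ k) (hb : b < p ^ k) : digitRotate p k j b < p ^ k := by
  have hk : p ^ j * p ^ (k - j) = p ^ k := by rw [← pow_add, Nat.add_sub_cancel' hj]
  have hpj : 0 < p ^ j := Nat.pos_of_mul_pos_right (hk ▸ Nat.zero_lt_of_lt hb)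
  have hx : b % p ^ j < p ^ j := Nat.mod_lt b hpj
  have hy : b / p ^ j < p ^ (k - j) := by rwa [Nat.div_lt_iff_lt_mul hpj, Nat.mul_comm, hk]
  calc p ^ (k - j) * (b % p ^ j) + b / p ^ j
      < p ^ (k - j) * (b % p ^ j + 1) := by rw [Nat.mul_succ]; omega
    _ ≤ p ^ (k - j) * p ^ j := Nat.mul_le_mul_left _ hx
    _ = p ^ k := by rw [Nat.mul_comm, hk]

lemma pow_sub_mul_eq_digitRotate_add (hp : 0 < p) (hj : j ≤ k) :
    p ^ (k - j) * b = digitRotate p k j b + (p ^ k - 1) * (b / p ^ j) := by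
  have hk : p ^ (k - j) * p ^ j = p ^ k := by rw [← pow_add, Nat.sub_add_cancel hj]
  have hpk : 0 < p ^ k := by positivity
  calc p ^ (k - j) * b = p ^ (k - j) * (b % p ^ j + p ^ j * (b / p ^ j)) := by
        rw [Nat.mod_add_div]
    _ = p ^ (k - j) * (b % p ^ j) + (p ^ k - 1 + 1) * (b / p ^ j) := by
        rw [Nat.sub_add_cancel hpk, ← hk]; ring
    _ = digitRotate p k j b + (p ^ k - 1) * (b / p ^ j) := by unfold digitRotate; ring

lemma pow_sub_mul_sub_one_mod_add_one (hp : 0 < p) (hj : j ≤ k) (hb0 : 0 < b)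
    (hb : b < p ^ k) :
    (p ^ (k - j) * b - 1) % (p ^ k - 1) + 1 = digitRotate p k j b := by
  rw [pow_sub_mul_eq_digitRotate_add hp hj]
  exact add_mul_sub_one_mod_add_one _ (digitRotate_pos hp hb0)
    (Nat.le_sub_one_of_lt (digitRotate_lt hj hb))

lemma sub_one_mul_sum_div_pow_add_digits_sum (hp : 1 < p) (hb : b < p ^ k) :
    (p - 1) * ∑ j ∈ range k, b / p ^ j + (p.digits b).sum = p * b := by
  induction k generalizing b with
  | zero => simp_all
  | succ k ih =>
    rcases Nat.eq_zero_or_pos b with rfl | hb0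
    · simp
    have hdiv : b / p < p ^ k := by
      rwa [Nat.div_lt_iff_lt_mul (by omega), ← pow_succ]
    have hshift : ∑ j ∈ range (k + 1), b / p ^ j = b + ∑ j ∈ range k, b / p / p ^ j := by
      simp only [sum_range_succ', pow_succ', ← Nat.div_div_eq_div_mul, pow_zero, Nat.div_one,
        add_comm]
    have hp1 : p - 1 + 1 = p := Nat.sub_add_cancel hp.le
    rw [hshift, Nat.digits_eq_cons_digits_div hp hb0.ne', List.sum_cons]
    linear_combination ih hdiv + Nat.mod_add_div b p + b * hp1

lemma sub_one_mul_sum_pow_sub (p k : ℕ) :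
    (p - 1) * ∑ j ∈ range k, p ^ (k - j) = p * (p ^ k - 1) := by
  rcases Nat.eq_zero_or_pos p with rfl | hp
  · simp
  obtain ⟨r, rfl⟩ : ∃ r, p = r + 1 := ⟨p - 1, by omega⟩
  have hreflect : ∑ j ∈ range k, (r + 1) ^ (k - j) = (r + 1) * ∑ j ∈ range k, (r + 1) ^ j := by
    rw [← sum_range_reflect, mul_sum]
    refine sum_congr rfl fun j hj => ?_
    rw [← pow_succ']
    congr 1
    have := mem_range.mp hj
    omega
  rw [hreflect, Nat.add_sub_cancel, ← geom_sum_mul_add r k, Nat.add_sub_cancel]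
  ring

lemma sub_one_mul_sum_digitRotate (hp : 1 < p) (hb : b < p ^ k) :
    (p - 1) * ∑ j ∈ range k, digitRotate p k j b = (p ^ k - 1) * (p.digits b).sum := by
  have hrotate : ∑ j ∈ range k, digitRotate p k j b + (p ^ k - 1) * ∑ j ∈ range k, b / p ^ j
      = b * ∑ j ∈ range k, p ^ (k - j) := by
    rw [mul_sum, mul_sum, ← sum_add_distrib]
    refine sum_congr rfl fun j hj => ?_
    rw [Nat.mul_comm b, pow_sub_mul_eq_digitRotate_add (by omega) (mem_range.mp hj).le]
  have hgeom := sub_one_mul_sum_pow_sub p k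
  have hdigits := sub_one_mul_sum_div_pow_add_digits_sum hp hb
  linear_combination (p - 1) * hrotate + b * hgeom - (p ^ k - 1) * hdigits

lemma pow_sub_one_mul_digits_sum (hb0 : 0 < b) (hb : b < p ^ k) :
    (p ^ k - 1) * (p.digits b).sum =
      (p - 1) * ∑ j ∈ range k, ((p ^ (k - j) * b - 1) % (p ^ k - 1) + 1) := by
  have hp : 1 < p := by
    by_contra! h
    have : p ^ k ≤ 1 := pow_le_one₀ (Nat.zero_le p) h
    omega
  rw [← sub_one_mul_sum_digitRotate hp hb]
  exact congrArg _ <| sum_congr rfl fun j hj =>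
    (pow_sub_mul_sub_one_mod_add_one (by omega) (mem_range.mp hj).le hb0 hb).symm

end Nat

open Finset in
theorem digit_sum_eq_p_sub_one_mul_sum_s_general (p t q n : ℕ)
    (hq : q = p ^ t) (b : Fin (n + 1) → ℕ)
    (hb : ∀ i, b i ≤ q ^ 2 - 1)
    (M : Fin (n + 1) → ℕ → ℕ)
    (hM : ∀ i j, M i j =
      if b i = 0 then 0 else (p ^ (2 * t - j) * b i - 1) % (q ^ 2 - 1) + 1) :
    (q ^ 2 - 1) * ∑ i, (Nat.digits p (b i)).sum =
      (p - 1) * ∑ j ∈ Finset.range (2 * t), ∑ i, M i j := by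
  have hq2 : q ^ 2 = p ^ (2 * t) := by rw [hq, ← pow_mul, mul_comm]
  rw [sum_comm, mul_sum, mul_sum]
  refine sum_congr rfl fun i _ => ?_
  rcases Nat.eq_zero_or_pos (b i) with hzero | hpos
  · simp [hM, hzero]
  · have hlt : b i < p ^ (2 * t) := by have := hb i; omega
    simp only [hM, if_neg hpos.ne', hq2]
    exact Nat.pow_sub_one_mul_digits_sum hpos hlt

open Finset in
/-- For exponents `b_0, …, b_n` in `{0, …, q²−1}`, not all zero, with sum divisible by
`q²−1`, the total base-`p` digit sum `Σ_i σ_p(b_i) = Σ_j λ_j` equals `(p−1)` times the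
sum `Σ_j s_j` of the `H`-type entries, where
`(q²−1)s_j = Σ_i (p^(2t−j) b_i mod (q²−1))` with the convention that the residue is
`q²−1` (not `0`) when `b_i = q²−1`, and `0` when `b_i = 0`. -/
theorem digit_sum_eq_p_sub_one_mul_sum_s (p t q n : ℕ) (hp : p.Prime) (ht : 0 < t)
    (hq : q = p ^ t) (b : Fin (n + 1) → ℕ)
    (hb : ∀ i, b i ≤ q ^ 2 - 1)
    (hne : ¬ ∀ i, b i = 0)
    (hdvd : (q ^ 2 - 1) ∣ ∑ i, b i)
    (M : Fin (n + 1) → ℕ → ℕ)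
    (hM : ∀ i j, M i j =
      if b i = 0 then 0 else (p ^ (2 * t - j) * b i - 1) % (q ^ 2 - 1) + 1) :
    (q ^ 2 - 1) * ∑ i, (Nat.digits p (b i)).sum =
      (p - 1) * ∑ j ∈ Finset.range (2 * t), ∑ i, M i j :=
  digit_sum_eq_p_sub_one_mul_sum_s_general p t q n hq b hb M hM
end

section
/- Let p be a prime, t ≥ 1, q = p^t, and suppose nonnegative integers k_1, ..., k_5 sum to 2(q^2 − q). Fix j with 1 ≤ j ≤ t and suppose that in the base-p addition k_1 + ... + k_5 = 2(q^2 − q) there is no carry into the j-th digit position and no carry into the (j+t)-th digit position. Then Σ_{i=1}^5 ((p^(t−j) k_i mod (q^2−1)) + (p^(2t−j) k_i mod (q^2−1))) = q^2 − 1, where each 'mod' denotes the least nonnegative residue. -/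
/-! Nothing carries into position `j` and `p^j` divides the total, so `k_i = p^j m_i`; the
condition at position `j + t` then says that the `m_i` add without carry in base `q`.
Write `m_i = c_i + q b_i` with base-`q` digits `c_i, b_i`. The two twists are multiplication
of `m_i` by `q` and by `q²`; modulo `q² − 1` the first swaps the two digits and the second is
the identity, so the residues are `q c_i + b_i` and `c_i + q b_i`, adding up to
`(q + 1)(c_i + b_i)`. Without carries the digits of the `m_i` add up to the digits of
`Σ m_i = 2p^(t−j)(q − 1)`, which are `q − 2p^(t−j)` and `2p^(t−j) − 1`, of total `q − 1`. -/

open Finset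

section NoCarry

variable {ι : Type*} (s : Finset ι) (k : ι → ℕ) {d : ℕ}

theorem sum_mod_eq_mod_sum_of_lt (h : ∑ i ∈ s, k i % d < d) :
    ∑ i ∈ s, k i % d = (∑ i ∈ s, k i) % d := by
  rw [sum_nat_mod, Nat.mod_eq_of_lt h]

theorem sum_div_eq_div_sum_of_lt (h : ∑ i ∈ s, k i % d < d) :
    ∑ i ∈ s, k i / d = (∑ i ∈ s, k i) / d := by
  have hsplit : ∑ i ∈ s, k i % d + d * ∑ i ∈ s, k i / d = ∑ i ∈ s, k i := by
    rw [mul_sum, ← sum_add_distrib]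
    exact sum_congr rfl fun i _ => Nat.mod_add_div (k i) d
  rw [sum_mod_eq_mod_sum_of_lt s k h] at hsplit
  exact Nat.eq_of_mul_eq_mul_left (show 0 < d by omega)
    (by linarith [Nat.mod_add_div (∑ i ∈ s, k i) d])

theorem dvd_of_dvd_sum_of_sum_mod_lt (h : ∑ i ∈ s, k i % d < d) (hd : d ∣ ∑ i ∈ s, k i)
    {i : ι} (hi : i ∈ s) : d ∣ k i := by
  have hzero : ∑ i ∈ s, k i % d = 0 := by
    rw [sum_mod_eq_mod_sum_of_lt s k h, Nat.mod_eq_zero_of_dvd hd]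
  exact Nat.dvd_of_mod_eq_zero (sum_eq_zero_iff.mp hzero i hi)

end NoCarry

theorem mul_pred_mod_add_div {a q : ℕ} (ha : 0 < a) (haq : a ≤ q) :
    a * (q - 1) % q + a * (q - 1) / q = q - 1 := by
  have hsplit : a * (q - 1) = (q - a) + q * (a - 1) := by
    zify [ha, haq, (show 1 ≤ q by omega)]; ring
  rw [hsplit, Nat.add_mul_mod_self_left, Nat.add_mul_div_left _ _ (by omega),
    Nat.mod_eq_of_lt (by omega), Nat.div_eq_of_lt (by omega)]
  omega

theorem lt_sq_sub_one_of_mod_add_div_lt {q m : ℕ} (hq : 1 < q) (h : m % q + m / q < q) :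
    m < q ^ 2 - 1 := by
  have hm := Nat.mod_add_div m q
  generalize m % q = c at *
  generalize m / q = b at *
  subst hm
  zify [Nat.one_le_pow 2 q (by omega)] at *
  nlinarith

theorem mul_mod_sq_sub_one {q m : ℕ} (hm : m < q ^ 2 - 1) :
    q * m % (q ^ 2 - 1) = q * (m % q) + m / q := by
  have hq : 1 < q := by
    by_contra! h
    interval_cases q <;> simp at hm
  have hq2 : 1 ≤ q ^ 2 := Nat.one_le_pow _ _ (by omega)
  have hc : m % q < q := Nat.mod_lt m (by omega)
  have hb : m / q < q := Nat.div_lt_of_lt_mul (by rw [← sq]; omega)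
  have hrot : q * m ≡ q * (m % q) + m / q [MOD q ^ 2 - 1] := by
    have hsplit : q * m = (q * (m % q) + m / q) + (q ^ 2 - 1) * (m / q) := by
      conv_lhs => rw [← Nat.mod_add_div m q]
      zify [hq2]; ring
    rw [hsplit]
    exact Nat.add_mul_mod_self_left _ _ _
  have hlt : q * (m % q) + m / q < q ^ 2 - 1 := by
    have hm' := Nat.mod_add_div m q
    generalize m % q = c at *
    generalize m / q = b at *
    subst hm'
    zify [hq2] at *
    rcases lt_or_eq_of_le (show (b : ℤ) ≤ q - 1 by omega) with hb' | hb'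
    · nlinarith
    · rw [hb'] at hm ⊢; nlinarith
  rw [hrot, Nat.mod_eq_of_lt hlt]

theorem sq_mul_mod_sq_sub_one {q m : ℕ} (hm : m < q ^ 2 - 1) : q ^ 2 * m % (q ^ 2 - 1) = m := by
  have hsq : q ^ 2 * m ≡ m [MOD q ^ 2 - 1] := by
    simpa using (Nat.modEq_sub (show 1 ≤ q ^ 2 by omega)).mul_right m
  rw [hsq, Nat.mod_eq_of_lt hm]

theorem sum_mul_mod_add_sq_mul_mod {ι : Type*} (s : Finset ι) (m : ι → ℕ) {q : ℕ} (hq : 1 < q)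
    (hcarry : ∑ i ∈ s, m i % q < q) (hdigits : (∑ i ∈ s, m i) % q + (∑ i ∈ s, m i) / q = q - 1) :
    ∑ i ∈ s, (q * m i % (q ^ 2 - 1) + q ^ 2 * m i % (q ^ 2 - 1)) = q ^ 2 - 1 := by
  have hdigit_sum : ∑ i ∈ s, (m i % q + m i / q) = q - 1 := by
    rw [sum_add_distrib, sum_mod_eq_mod_sum_of_lt s m hcarry,
      sum_div_eq_div_sum_of_lt s m hcarry, hdigits]
  have hlt : ∀ i ∈ s, m i < q ^ 2 - 1 := fun i hi =>
    lt_sq_sub_one_of_mod_add_div_lt hq <|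
      (single_le_sum (f := fun i => m i % q + m i / q) (fun _ _ => Nat.zero_le _) hi).trans_lt
        (by omega)
  calc ∑ i ∈ s, (q * m i % (q ^ 2 - 1) + q ^ 2 * m i % (q ^ 2 - 1))
      = ∑ i ∈ s, (q + 1) * (m i % q + m i / q) := sum_congr rfl fun i hi => by
        rw [mul_mod_sq_sub_one (hlt i hi), sq_mul_mod_sq_sub_one (hlt i hi)]
        linarith [Nat.mod_add_div (m i) q]
    _ = (q + 1) * (q - 1) := by rw [← mul_sum, hdigit_sum]
    _ = q ^ 2 - 1 := by rw [← Nat.sq_sub_sq, one_pow]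

theorem sum_twisted_residues {ι : Type*} (s : Finset ι) (k : ι → ℕ) {u v q : ℕ}
    (hq : q = u * v) (hu : 2 ≤ u) (hv : 0 < v) (hk : ∑ i ∈ s, k i = 2 * (q ^ 2 - q))
    (hcarry_u : ∑ i ∈ s, k i % u < u) (hcarry_uq : ∑ i ∈ s, k i % (u * q) < u * q) :
    ∑ i ∈ s, (v * k i % (q ^ 2 - 1) + q * v * k i % (q ^ 2 - 1)) = q ^ 2 - 1 := by
  have h2v : 2 * v ≤ q := hq ▸ Nat.mul_le_mul_right v hu
  have hsum : ∑ i ∈ s, k i = u * (2 * v * (q - 1)) := by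
    rw [hk, sq, ← Nat.mul_sub_one, hq]; ring
  have hk_eq : ∀ i ∈ s, k i = u * (k i / u) := fun i hi =>
    (Nat.mul_div_cancel' (dvd_of_dvd_sum_of_sum_mod_lt s k hcarry_u
      (hsum ▸ dvd_mul_right _ _) hi)).symm
  set m := fun i => k i / u
  have hsum_m : ∑ i ∈ s, m i = 2 * v * (q - 1) := by
    refine Nat.eq_of_mul_eq_mul_left (show 0 < u by omega) ?_
    rw [mul_sum, ← hsum]
    exact sum_congr rfl fun i hi => (hk_eq i hi).symm
  have hcarry_m : ∑ i ∈ s, m i % q < q := by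
    refine Nat.lt_of_mul_lt_mul_left (a := u) ?_
    rw [mul_sum]
    calc ∑ i ∈ s, u * (m i % q) = ∑ i ∈ s, k i % (u * q) :=
          sum_congr rfl fun i hi => by rw [hk_eq i hi, Nat.mul_mod_mul_left]
      _ < u * q := hcarry_uq
  have htwist : ∀ i ∈ s, v * k i = q * m i ∧ q * v * k i = q ^ 2 * m i := fun i hi => by
    constructor <;> rw [hk_eq i hi, hq] <;> ring
  rw [sum_congr rfl fun i hi => by rw [(htwist i hi).1, (htwist i hi).2]]
  exact sum_mul_mod_add_sq_mul_mod s m (by omega) hcarry_m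
    (hsum_m ▸ mul_pred_mod_add_div (by omega) h2v)

open Finset in
theorem no_carry_twisted_degree_sum_general (p t q : ℕ) (hp : p.Prime)
    (hq : q = p ^ t) (k : Fin 5 → ℕ)
    (hk : ∑ i, k i = 2 * (q ^ 2 - q))
    (j : ℕ) (hj1 : 1 ≤ j) (hjt : j ≤ t)
    (hc1 : (∑ i, k i % p ^ j) / p ^ j = 0)
    (hc2 : (∑ i, k i % p ^ (j + t)) / p ^ (j + t) = 0) :
    ∑ i, (p ^ (t - j) * k i % (q ^ 2 - 1) + p ^ (2 * t - j) * k i % (q ^ 2 - 1)) =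
      q ^ 2 - 1 := by
  have hq_split : q = p ^ j * p ^ (t - j) := by rw [hq, ← pow_add, Nat.add_sub_cancel' hjt]
  have hp_twist : p ^ (2 * t - j) = q * p ^ (t - j) := by
    rw [hq, ← pow_add]; congr 1; omega
  rw [hp_twist]
  refine sum_twisted_residues univ k hq_split
    (hp.two_le.trans (Nat.le_self_pow (by omega) p)) (pow_pos hp.pos _) hk ?_ ?_
  · exact (Nat.div_eq_zero_iff.mp hc1).resolve_left (pow_ne_zero _ hp.ne_zero)
  · rw [hq, ← pow_add]
    exact (Nat.div_eq_zero_iff.mp hc2).resolve_left (pow_ne_zero _ hp.ne_zero)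

open Finset in
/-- Suppose `k_1 + ⋯ + k_5 = 2(q² − q)` with `q = p^t`, and fix `j` with `1 ≤ j ≤ t`.
If in the base-`p` addition of the `k_i` there is no carry into the `j`-th digit
position nor into the `(j+t)`-th position (the carry into position `m` being
`(Σ_i (k_i mod p^m)) / p^m`), then
`Σ_i ((p^(t−j) k_i mod (q²−1)) + (p^(2t−j) k_i mod (q²−1))) = q² − 1`. -/
theorem no_carry_twisted_degree_sum (p t q : ℕ) (hp : p.Prime) (ht : 0 < t)
    (hq : q = p ^ t) (k : Fin 5 → ℕ)
    (hk : ∑ i, k i = 2 * (q ^ 2 - q))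
    (j : ℕ) (hj1 : 1 ≤ j) (hjt : j ≤ t)
    (hc1 : (∑ i, k i % p ^ j) / p ^ j = 0)
    (hc2 : (∑ i, k i % p ^ (j + t)) / p ^ (j + t) = 0) :
    ∑ i, (p ^ (t - j) * k i % (q ^ 2 - 1) + p ^ (2 * t - j) * k i % (q ^ 2 - 1)) =
      q ^ 2 - 1 :=
  no_carry_twisted_degree_sum_general p t q hp hq k hk j hj1 hjt hc1 hc2
end
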